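/- Let U ~ L_k(m,Σ) with nonsingular Σ and density f_U, and let τ_r(A) = d_k^{-1} λ_{k−1}(π(A ∩ ℍ_r)). Then the distribution μ_{S_Δ(U)} of S_Δ(U) is absolutely continuous with respect to Lebesgue measure λ on ℝ, with Radon–Nikodym derivative f_{S_Δ(U)}(r) = ∫_{ℝ^k} f_U(u) 1_{ℍ_r}(u) dτ_r(u). -/

import Mathlib

open MeasureTheory ENNReal Set Matrix

noncomputable section

def stepLen {k : ℕ} (t : Fin (k + 1) → ℝ) (i : Fin k) : ℝ :=
  t i.succ - t i.castSucc

def Sdelta {k : ℕ} (t : Fin (k + 1) → ℝ) (u : Fin k → ℝ) : ℝ :=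
  ∑ i, stepLen t i * u i

def Hset {k : ℕ} (t : Fin (k + 1) → ℝ) (r : ℝ) : Set (Fin k → ℝ) :=
  {v | (∀ i, 0 < v i) ∧ Sdelta t v = r}

def posOrthant (k : ℕ) : Set (Fin k → ℝ) :=
  {v | ∀ i, 0 < v i}

def projFirst {k : ℕ} (v : Fin k → ℝ) (i : Fin (k - 1)) : ℝ :=
  v (Fin.castLE (Nat.sub_le k 1) i)

def dLast {k : ℕ} (hk : 0 < k) (t : Fin (k + 1) → ℝ) : ℝ :=
  stepLen t ⟨k - 1, Nat.sub_lt hk one_pos⟩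

/-- The lognormal density `f_U` of `U ~ L_k(m, Σ)` with respect to `λ_k`:
`f_U(u) = (2π)^{-k/2} |Σ|^{-1/2} (∏ u_i⁻¹) exp(-½ (log u - m)ᵀ Sig⁻¹ (log u - m)) 1_{ℝ^k_+}(u)`. -/
def logNormalDensity {k : ℕ} (m : Fin k → ℝ) (Sig : Matrix (Fin k) (Fin k) ℝ)
    (u : Fin k → ℝ) : ℝ :=
  (posOrthant k).indicator
    (fun u =>
      (2 * Real.pi) ^ (-(k : ℝ) / 2) * Sig.det ^ (-(1 : ℝ) / 2) * (∏ i, (u i)⁻¹) *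
        Real.exp (-(1 / 2) *
          (((fun i => Real.log (u i)) - m) ⬝ᵥ (Sig⁻¹ *ᵥ ((fun i => Real.log (u i)) - m))))) u

/-!
Write `S_Δ(u) = c(π u) + d_k u_k`. For fixed `π u = w` the substitution `r = c(w) + d_k u_k`
turns Tonelli on `ℝ^{k-1} × ℝ` into `∫ f = d_k⁻¹ ∫ dr ∫ f(ψ_r w) dw`, where
`ψ_r = levelSetLift` inverts `π` on the hyperplane `S_Δ = r`; this gives the density of `S_Δ(U)`.
On the other hand `π` maps `A ∩ ℍ_r` onto `ψ_r⁻¹(A ∩ ℝ^k_+)`, so `τ_r` is `d_k⁻¹ ψ_r(λ_{k-1})`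
restricted to `ℝ^k_+`, and integrating `f_U 1_{ℍ_r}` against it gives the same function of `r`
because `f_U` vanishes off `ℝ^k_+`.
-/

lemma lintegral_comp_const_add_mul (f : ℝ → ℝ≥0∞) {d : ℝ} (hd : d ≠ 0) (a : ℝ) :
    ∫⁻ x, f (a + d * x) = ENNReal.ofReal |d⁻¹| * ∫⁻ y, f y := by
  rw [← (measurableEmbedding_mulLeft₀ hd).lintegral_map (fun y => f (a + y)),
    Real.map_volume_mul_left hd, lintegral_smul_measure, smul_eq_mul,
    lintegral_add_left_eq_self f a]

lemma lintegral_eq_lintegral_lintegral_snoc {n : ℕ} {f : (Fin (n + 1) → ℝ) → ℝ≥0∞}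
    (hf : Measurable f) : ∫⁻ u, f u = ∫⁻ w, ∫⁻ x, f (Fin.snoc w x) := by
  let e := (MeasurableEquiv.piFinSuccAbove (fun _ : Fin (n + 1) => ℝ) (Fin.last n)).symm
  have he : MeasurePreserving e := (volume_preserving_piFinSuccAbove _ (Fin.last n)).symm
  have he_apply (p : ℝ × (Fin n → ℝ)) : e p = Fin.snoc p.2 p.1 := by
    simp [e, MeasurableEquiv.piFinSuccAbove_symm_apply, Fin.insertNthEquiv, Fin.insertNth_last']
  rw [← he.lintegral_comp_emb e.measurableEmbedding, Measure.volume_eq_prod,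
    lintegral_prod_symm _ (show Measurable fun p => f (e p) from hf.comp e.measurable).aemeasurable]
  simp only [he_apply]

section LevelSets

variable {n : ℕ} (c : (Fin n → ℝ) → ℝ) (d : ℝ)

def levelFn (u : Fin (n + 1) → ℝ) : ℝ :=
  c (Fin.init u) + d * u (Fin.last n)

def levelSetLift (r : ℝ) (w : Fin n → ℝ) : Fin (n + 1) → ℝ :=
  Fin.snoc w ((r - c w) / d)

variable {c d}

@[simp]
lemma init_levelSetLift (r : ℝ) (w : Fin n → ℝ) : Fin.init (levelSetLift c d r w) = w :=
  Fin.init_snoc _ _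

lemma levelFn_snoc (w : Fin n → ℝ) (x : ℝ) : levelFn c d (Fin.snoc w x) = c w + d * x := by
  simp [levelFn]

lemma levelFn_levelSetLift (hd : d ≠ 0) (r : ℝ) (w : Fin n → ℝ) :
    levelFn c d (levelSetLift c d r w) = r := by
  rw [levelSetLift, levelFn_snoc]
  field_simp
  ring

lemma levelSetLift_init (hd : d ≠ 0) {u : Fin (n + 1) → ℝ} {r : ℝ}
    (hu : levelFn c d u = r) :
    levelSetLift c d r (Fin.init u) = u := by
  conv_rhs => rw [← Fin.snoc_init_self u]
  rw [levelSetLift, ← hu, levelFn]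
  congr 1
  field_simp
  ring

lemma levelSetLift_levelFn_snoc (hd : d ≠ 0) (w : Fin n → ℝ) (x : ℝ) :
    levelSetLift c d (c w + d * x) w = Fin.snoc w x := by
  simpa [levelFn_snoc] using levelSetLift_init hd (levelFn_snoc (c := c) (d := d) w x)

lemma image_init_inter_preimage_levelFn (hd : d ≠ 0) (A : Set (Fin (n + 1) → ℝ)) (r : ℝ) :
    Fin.init '' (A ∩ levelFn c d ⁻¹' {r}) = levelSetLift c d r ⁻¹' A := by
  ext w
  constructor
  · rintro ⟨u, ⟨huA, hur⟩, rfl⟩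
    rwa [mem_preimage, levelSetLift_init hd hur]
  · intro hw
    exact ⟨_, ⟨hw, levelFn_levelSetLift hd r w⟩, init_levelSetLift r w⟩

lemma measurable_levelFn (hc : Measurable c) : Measurable (levelFn c d) := by
  unfold levelFn Fin.init
  fun_prop

lemma measurable_levelSetLift_uncurry (hc : Measurable c) :
    Measurable fun p : ℝ × (Fin n → ℝ) => levelSetLift c d p.1 p.2 := by
  refine measurable_pi_lambda _ fun i => ?_
  induction i using Fin.lastCases with
  | last => simpa [levelSetLift] using (measurable_fst.sub (hc.comp measurable_snd)).div_const d
  | cast j =>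
    simp only [levelSetLift, Fin.snoc_castSucc]
    fun_prop

lemma measurable_levelSetLift (hc : Measurable c) (r : ℝ) : Measurable (levelSetLift c d r) :=
  (measurable_levelSetLift_uncurry hc).comp (measurable_const.prodMk measurable_id)

lemma lintegral_eq_lintegral_levelSetLift (hc : Measurable c) (hd : 0 < d)
    {f : (Fin (n + 1) → ℝ) → ℝ≥0∞} (hf : Measurable f) :
    ∫⁻ u, f u = ENNReal.ofReal d⁻¹ * ∫⁻ r, ∫⁻ w, f (levelSetLift c d r w) := by
  have hfiber (w : Fin n → ℝ) :
      ∫⁻ x, f (Fin.snoc w x) = ENNReal.ofReal d⁻¹ * ∫⁻ r, f (levelSetLift c d r w) := by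
    rw [← abs_of_pos (inv_pos.2 hd), ← lintegral_comp_const_add_mul _ hd.ne' (c w)]
    simp only [levelSetLift_levelFn_snoc hd.ne']
  simp only [lintegral_eq_lintegral_lintegral_snoc hf, hfiber]
  rw [lintegral_const_mul' _ _ ofReal_ne_top,
    lintegral_lintegral_swap (show Measurable (Function.uncurry fun w r => f (levelSetLift c d r w))
      from hf.comp ((measurable_levelSetLift_uncurry hc).comp measurable_swap)).aemeasurable]

lemma map_levelFn_withDensity (hc : Measurable c) (hd : 0 < d)
    {g : (Fin (n + 1) → ℝ) → ℝ≥0∞} (hg : Measurable g) :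
    (volume.withDensity g).map (levelFn c d) =
      volume.withDensity fun r => ENNReal.ofReal d⁻¹ * ∫⁻ w, g (levelSetLift c d r w) := by
  ext B hB
  have hpre : MeasurableSet (levelFn c d ⁻¹' B) := measurable_levelFn hc hB
  have hfiber (r : ℝ) : ∫⁻ w, (levelFn c d ⁻¹' B).indicator g (levelSetLift c d r w) =
      B.indicator (fun r => ∫⁻ w, g (levelSetLift c d r w)) r := by
    by_cases hr : r ∈ B <;> simp [hr, levelFn_levelSetLift hd.ne']
  rw [Measure.map_apply (measurable_levelFn hc) hB, withDensity_apply _ hpre,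
    withDensity_apply _ hB, ← lintegral_indicator hpre,
    lintegral_eq_lintegral_levelSetLift hc hd (hg.indicator hpre)]
  simp only [hfiber]
  rw [lintegral_indicator hB, lintegral_const_mul' _ _ ofReal_ne_top]

lemma eq_smul_restrict_map_levelSetLift (hc : Measurable c) (hd : d ≠ 0)
    {τ : Measure (Fin (n + 1) → ℝ)} {P : Set (Fin (n + 1) → ℝ)} (hP : MeasurableSet P)
    {r : ℝ}
    (hτ : ∀ A, MeasurableSet A →
      τ A = ENNReal.ofReal d⁻¹ * volume (Fin.init '' (A ∩ (P ∩ levelFn c d ⁻¹' {r})))) :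
    τ = ENNReal.ofReal d⁻¹ • (volume.map (levelSetLift c d r)).restrict P := by
  ext A hA
  rw [hτ A hA, ← inter_assoc, image_init_inter_preimage_levelFn hd, Measure.smul_apply,
    Measure.restrict_apply hA, Measure.map_apply (measurable_levelSetLift hc r) (hA.inter hP),
    smul_eq_mul]

lemma lintegral_mul_indicator_levelSet (hc : Measurable c) (hd : d ≠ 0)
    {τ : Measure (Fin (n + 1) → ℝ)} {P : Set (Fin (n + 1) → ℝ)} (hP : MeasurableSet P)
    {r : ℝ}
    (hτ : ∀ A, MeasurableSet A →
      τ A = ENNReal.ofReal d⁻¹ * volume (Fin.init '' (A ∩ (P ∩ levelFn c d ⁻¹' {r}))))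
    {g : (Fin (n + 1) → ℝ) → ℝ≥0∞} (hg : Measurable g) (hgP : ∀ u ∉ P, g u = 0) :
    ∫⁻ u, g u * (P ∩ levelFn c d ⁻¹' {r}).indicator 1 u ∂τ =
      ENNReal.ofReal d⁻¹ * ∫⁻ w, g (levelSetLift c d r w) := by
  have hH : MeasurableSet (P ∩ levelFn c d ⁻¹' {r}) :=
    hP.inter (measurable_levelFn hc (measurableSet_singleton r))
  have hlift (w : Fin n → ℝ) :
      P.indicator (fun u => g u * (P ∩ levelFn c d ⁻¹' {r}).indicator 1 u)
          (levelSetLift c d r w) =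
        g (levelSetLift c d r w) := by
    by_cases hw : levelSetLift c d r w ∈ P
    · simp [hw, levelFn_levelSetLift hd]
    · simp [hw, hgP _ hw]
  rw [eq_smul_restrict_map_levelSetLift hc hd hP hτ, lintegral_smul_measure, smul_eq_mul,
    ← lintegral_indicator hP,
    lintegral_map (f := P.indicator fun u => g u * (P ∩ levelFn c d ⁻¹' {r}).indicator 1 u)
      ((hg.mul (measurable_one.indicator hH)).indicator hP) (measurable_levelSetLift hc r)]
  simp only [hlift]

end LevelSets

lemma stepLen_pos {k : ℕ} {t : Fin (k + 1) → ℝ} (ht : StrictMono t) (i : Fin k) :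
    0 < stepLen t i :=
  sub_pos.2 (ht Fin.castSucc_lt_succ)

lemma measurable_Sdelta {k : ℕ} (t : Fin (k + 1) → ℝ) : Measurable (Sdelta t) := by
  unfold Sdelta
  fun_prop

lemma Sdelta_eq_levelFn {n : ℕ} (t : Fin (n + 2) → ℝ) :
    Sdelta t = levelFn (Sdelta (Fin.init t)) (stepLen t (Fin.last n)) := by
  funext u
  simp only [Sdelta, levelFn, Fin.sum_univ_castSucc]
  rfl

lemma Hset_eq_inter_preimage {k : ℕ} (t : Fin (k + 1) → ℝ) (r : ℝ) :
    Hset t r = posOrthant k ∩ Sdelta t ⁻¹' {r} :=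
  rfl

lemma measurableSet_posOrthant (k : ℕ) : MeasurableSet (posOrthant k) := by
  simp only [posOrthant, ofPred_forall]
  exact MeasurableSet.iInter fun i => measurableSet_lt measurable_const (measurable_pi_apply i)

lemma logNormalDensity_of_notMem {k : ℕ} (m : Fin k → ℝ) (Sig : Matrix (Fin k) (Fin k) ℝ)
    {u : Fin k → ℝ} (hu : u ∉ posOrthant k) : logNormalDensity m Sig u = 0 :=
  indicator_of_notMem hu _

lemma measurable_logNormalDensity {k : ℕ} (m : Fin k → ℝ) (Sig : Matrix (Fin k) (Fin k) ℝ) :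
    Measurable (logNormalDensity m Sig) := by
  refine Measurable.indicator ?_ (measurableSet_posOrthant k)
  simp only [dotProduct, mulVec, Pi.sub_apply]
  fun_prop

theorem simple_random_densities_stmt6_general
    (k : ℕ) (hk : 0 < k) (t : Fin (k + 1) → ℝ) (ht : StrictMono t)
    (m : Fin k → ℝ) (Sig : Matrix (Fin k) (Fin k) ℝ)
    {Ω : Type*} [MeasurableSpace Ω] (P : Measure Ω)
    (U : Ω → Fin k → ℝ) (hU : Measurable U)
    (hlaw : Measure.map U P = volume.withDensity fun u => ENNReal.ofReal (logNormalDensity m Sig u))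
    (τ : ℝ → Measure (Fin k → ℝ))
    (hτ : ∀ r : ℝ, ∀ A : Set (Fin k → ℝ), MeasurableSet A →
      τ r A = ENNReal.ofReal (dLast hk t)⁻¹ * volume (projFirst '' (A ∩ Hset t r))) :
    Measure.map (fun ω => Sdelta t (U ω)) P ≪ (volume : Measure ℝ) ∧
    Measure.map (fun ω => Sdelta t (U ω)) P =
      volume.withDensity fun r =>
        ∫⁻ u, ENNReal.ofReal (logNormalDensity m Sig u) * (Hset t r).indicator 1 u ∂(τ r) := by
  obtain ⟨n, rfl⟩ : ∃ n, k = n + 1 := ⟨k - 1, (Nat.succ_pred_eq_of_pos hk).symm⟩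
  have hd : 0 < dLast hk t := stepLen_pos ht _
  have hS : Sdelta t = levelFn (Sdelta (Fin.init t)) (dLast hk t) := Sdelta_eq_levelFn t
  have hc := measurable_Sdelta (Fin.init t)
  have hg := (measurable_logNormalDensity m Sig).ennreal_ofReal
  have hlawS : Measure.map (fun ω => Sdelta t (U ω)) P = volume.withDensity fun r =>
      ENNReal.ofReal (dLast hk t)⁻¹ *
        ∫⁻ w, ENNReal.ofReal
          (logNormalDensity m Sig (levelSetLift (Sdelta (Fin.init t)) (dLast hk t) r w)) := by
    rw [show (fun ω => Sdelta t (U ω)) = Sdelta t ∘ U from rfl,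
      ← Measure.map_map (measurable_Sdelta t) hU, hlaw, hS, map_levelFn_withDensity hc hd hg]
  refine ⟨hlawS ▸ withDensity_absolutelyContinuous _ _,
    hlawS.trans (congrArg _ (funext fun r => ?_))⟩
  have hτr := hτ r
  simp only [Hset_eq_inter_preimage, hS] at hτr ⊢
  refine (lintegral_mul_indicator_levelSet hc hd.ne' (measurableSet_posOrthant _) hτr hg
    fun u hu => ?_).symm
  rw [logNormalDensity_of_notMem m Sig hu, ENNReal.ofReal_zero]

/-- if `U ~ L_k(m,Σ)` with nonsingular `Σ`, the distribution of `S_Δ(U)` is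
absolutely continuous w.r.t. Lebesgue measure on `ℝ`, with density
`f_{S_Δ(U)}(r) = ∫ f_U 1_{ℍ_r} dτ_r`. -/
theorem simple_random_densities_stmt6
    (k : ℕ) (hk : 0 < k) (t : Fin (k + 1) → ℝ) (ht : StrictMono t)
    (m : Fin k → ℝ) (Sig : Matrix (Fin k) (Fin k) ℝ) (hSig : Sig.PosDef)
    {Ω : Type*} [MeasurableSpace Ω] (P : Measure Ω) [IsProbabilityMeasure P]
    (U : Ω → Fin k → ℝ) (hU : Measurable U)
    (hlaw : Measure.map U P = volume.withDensity fun u => ENNReal.ofReal (logNormalDensity m Sig u))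
    (τ : ℝ → Measure (Fin k → ℝ))
    (hτ : ∀ r : ℝ, ∀ A : Set (Fin k → ℝ), MeasurableSet A →
      τ r A = ENNReal.ofReal (dLast hk t)⁻¹ * volume (projFirst '' (A ∩ Hset t r))) :
    Measure.map (fun ω => Sdelta t (U ω)) P ≪ (volume : Measure ℝ) ∧
    Measure.map (fun ω => Sdelta t (U ω)) P =
      volume.withDensity fun r =>
        ∫⁻ u, ENNReal.ofReal (logNormalDensity m Sig u) * (Hset t r).indicator 1 u ∂(τ r) :=
  simple_random_densities_stmt6_general k hk t ht m Sig P U hU hlaw τ hτ
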